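/- Under the LSPE setup, let Λ̄₁ be a positive semidefinite d×d matrix. For each h ∈ {1,…,H}, the vector v_h = ( ∏_{h′=1}^{h−1} Λ̂_{h′}^{−1}Φ_{h′}ᵀΦ̄_{h′+1} ) · Λ̂_h^{−1}Φ_hᵀξ_h satisfies v_hᵀ·Λ̄₁·v_h ≤ ‖Λ̂₁^{−1/2}Λ̄₁Λ̂₁^{−1/2}‖₂ · ∏_{h′=1}^{h−1} ( ‖Φ_{h′}Λ̂_{h′}^{−1}Φ_{h′}ᵀ‖₂ · ‖Λ̂_{h′+1}^{−1/2}Φ̄_{h′+1}ᵀΦ̄_{h′+1}Λ̂_{h′+1}^{−1/2}‖₂ ) · ( ξ_hᵀΦ_hΛ̂_h^{−1}Φ_hᵀξ_h ), where Λ̂^{1/2} denotes the positive semidefinite square root, ‖·‖₂ the spectral norm, and the empty product (h = 1) is 1. -/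

import Mathlib

/-!
Write `‖z‖²_Λ = zᵀ Λ z`. For one factor `A = Λ̂⁻¹ Φᵀ Φ̄` of the product,
`‖A z‖²_{Λ̂} = (Φ̄ z)ᵀ (Φ Λ̂⁻¹ Φᵀ) (Φ̄ z) ≤ ‖Φ Λ̂⁻¹ Φᵀ‖₂ ‖Φ̄ z‖²`, and substituting
`z = S⁻¹ (S z)` with `S² = Λ̂'` gives `‖Φ̄ z‖² ≤ ‖S⁻¹ Φ̄ᵀ Φ̄ S⁻¹‖₂ ‖z‖²_{Λ̂'}`. These one-step
bounds chain along the product from `Λ̂₁` down to `Λ̂_h`; the same substitution with `S₁` compares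
the `Λ̄₁`-form with the `Λ̂₁`-form at the start, and at the end
`‖Λ̂_h⁻¹ Φ_hᵀ ξ‖²_{Λ̂_h} = ξᵀ Φ_h Λ̂_h⁻¹ Φ_hᵀ ξ`.
-/

open Matrix

/-- The ridge-regularized covariance matrix `Λ̂ = Φᵀ Φ + λ I`. -/
noncomputable def Lhat {N d : ℕ} (lam : ℝ) (Φ : Matrix (Fin N) (Fin d) ℝ) :
    Matrix (Fin d) (Fin d) ℝ :=
  Φᵀ * Φ + lam • 1

/-- The ℓ₂ operator (spectral) norm of a real matrix, i.e. the operator norm of the induced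
linear map between Euclidean spaces. -/
noncomputable def sNorm {m n : ℕ} (A : Matrix (Fin m) (Fin n) ℝ) : ℝ :=
  ‖LinearMap.toContinuousLinearMap (Matrix.toEuclideanLin A)‖

lemma sNorm_nonneg {m n : ℕ} (A : Matrix (Fin m) (Fin n) ℝ) : 0 ≤ sNorm A :=
  norm_nonneg _

lemma dotProduct_mulVec_le_sNorm_mul {n : ℕ} (M : Matrix (Fin n) (Fin n) ℝ) (x : Fin n → ℝ) :
    x ⬝ᵥ (M *ᵥ x) ≤ sNorm M * (x ⬝ᵥ x) := by
  set T := LinearMap.toContinuousLinearMap (Matrix.toEuclideanLin M)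
  set e := WithLp.toLp 2 x
  have hx : ‖e‖ * ‖e‖ = x ⬝ᵥ x := (real_inner_self_eq_norm_mul_norm e).symm
  calc x ⬝ᵥ (M *ᵥ x) = inner ℝ e (T e) := dotProduct_comm _ _
    _ ≤ ‖e‖ * ‖T e‖ := real_inner_le_norm _ _
    _ ≤ ‖e‖ * (‖T‖ * ‖e‖) := by gcongr; exact T.le_opNorm e
    _ = sNorm M * (x ⬝ᵥ x) := by rw [← hx]; unfold sNorm; ring

section
variable {m n R : Type*} [Fintype m] [Fintype n]

lemma mulVec_dotProduct_mulVec_self [CommSemiring R] (A : Matrix m n R) (x : n → R) :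
    (A *ᵥ x) ⬝ᵥ (A *ᵥ x) = x ⬝ᵥ ((Aᵀ * A) *ᵥ x) := by
  rw [← dotProduct_transpose_mulVec, mulVec_mulVec]

lemma mulVec_dotProduct_mulVec_mulVec [CommSemiring R] (C : Matrix m n R) (M : Matrix m m R)
    (y : n → R) :
    (C *ᵥ y) ⬝ᵥ (M *ᵥ (C *ᵥ y)) = y ⬝ᵥ ((Cᵀ * M * C) *ᵥ y) := by
  rw [dotProduct_comm, ← dotProduct_transpose_mulVec, mulVec_mulVec, mulVec_mulVec,
    Matrix.mul_assoc]

lemma nonsing_inv_transpose_mulVec_quadForm [CommRing R] [DecidableEq m] {Λ : Matrix m m R}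
    (hΛ : IsUnit Λ.det) (Φ : Matrix n m R) (u : n → R) :
    (Λ⁻¹ *ᵥ (Φᵀ *ᵥ u)) ⬝ᵥ (Λ *ᵥ (Λ⁻¹ *ᵥ (Φᵀ *ᵥ u))) = u ⬝ᵥ ((Φ * Λ⁻¹ * Φᵀ) *ᵥ u) := by
  rw [mulVec_mulVec _ Λ, mul_nonsing_inv _ hΛ, one_mulVec, dotProduct_comm,
    mulVec_dotProduct_mulVec_mulVec, transpose_transpose]

end

lemma dotProduct_mulVec_le_sNorm_conj_mul {d : ℕ} {S : Matrix (Fin d) (Fin d) ℝ} (hS : S.IsSymm)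
    (hSu : IsUnit S.det) (B : Matrix (Fin d) (Fin d) ℝ) (z : Fin d → ℝ) :
    z ⬝ᵥ (B *ᵥ z) ≤ sNorm (S⁻¹ * B * S⁻¹) * (z ⬝ᵥ ((S * S) *ᵥ z)) := by
  have hz : z = S⁻¹ *ᵥ (S *ᵥ z) := by rw [mulVec_mulVec, nonsing_inv_mul _ hSu, one_mulVec]
  conv_lhs => rw [hz, mulVec_dotProduct_mulVec_mulVec, hS.inv.eq]
  have hSS : S * S = Sᵀ * S := by rw [hS.eq]
  rw [hSS, ← mulVec_dotProduct_mulVec_self]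
  exact dotProduct_mulVec_le_sNorm_mul _ _

lemma listProd_range_mulVec_le {ι : Type*} [Fintype ι] [DecidableEq ι] (q : ℕ → (ι → ℝ) → ℝ)
    (A : ℕ → Matrix ι ι ℝ) (c : ℕ → ℝ) (n : ℕ) (hc : ∀ i < n, 0 ≤ c i)
    (hA : ∀ i < n, ∀ z, q i (A i *ᵥ z) ≤ c i * q (i + 1) z) (z : ι → ℝ) :
    q 0 (((List.range n).map A).prod *ᵥ z) ≤ (∏ i ∈ Finset.range n, c i) * q n z := by
  induction n generalizing z with
  | zero => simp
  | succ n ih =>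
    rw [List.range_succ, List.map_append, List.prod_append, List.map_singleton,
      List.prod_singleton, ← mulVec_mulVec, Finset.prod_range_succ, mul_assoc]
    calc _ ≤ (∏ i ∈ Finset.range n, c i) * q n (A n *ᵥ z) :=
          ih (fun i hi => hc i (by omega)) (fun i hi => hA i (by omega)) _
      _ ≤ _ := by
          gcongr
          · exact Finset.prod_nonneg fun i hi => hc i (by simp at hi; omega)
          · exact hA n n.lt_succ_self z

lemma Finset.prod_range_add_one_eq_prod_Icc {M : Type*} [CommMonoid M] (f : ℕ → M) (n : ℕ) :
    ∏ i ∈ Finset.range n, f (i + 1) = ∏ i ∈ Finset.Icc 1 n, f i := by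
  rw [Finset.range_eq_Ico, Finset.prod_Ico_add', zero_add, Finset.Ico_add_one_right_eq_Icc]

lemma Lhat_posDef {N d : ℕ} {lam : ℝ} (hlam : 0 < lam) (Φ : Matrix (Fin N) (Fin d) ℝ) :
    (Lhat lam Φ).PosDef := by
  have h1 : (Φᵀ * Φ).PosSemidef := by
    simpa only [conjTranspose_eq_transpose_of_trivial] using posSemidef_conjTranspose_mul_self Φ
  have h2 : (lam • 1 : Matrix (Fin d) (Fin d) ℝ).PosDef := by
    rw [smul_one_eq_diagonal]
    exact posDef_diagonal_iff.mpr fun _ => hlam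
  exact PosDef.posSemidef_add h1 h2

lemma isUnit_det_Lhat {N d : ℕ} {lam : ℝ} (hlam : 0 < lam) (Φ : Matrix (Fin N) (Fin d) ℝ) :
    IsUnit (Lhat lam Φ).det :=
  (Lhat_posDef hlam Φ).det_pos.ne'.isUnit

lemma isUnit_det_of_mul_self_eq_Lhat {N d : ℕ} {lam : ℝ} (hlam : 0 < lam)
    {Φ : Matrix (Fin N) (Fin d) ℝ} {S : Matrix (Fin d) (Fin d) ℝ} (hS : S * S = Lhat lam Φ) :
    IsUnit S.det :=
  isUnit_of_mul_isUnit_left <| by rw [← det_mul, hS]; exact isUnit_det_Lhat hlam Φ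

lemma Lhat_inv_mul_transpose_mul_quadForm_le {N d : ℕ} {lam : ℝ} (hlam : 0 < lam)
    (Φ Ψ : Matrix (Fin N) (Fin d) ℝ) {S : Matrix (Fin d) (Fin d) ℝ} (hS : S.IsSymm)
    (hSu : IsUnit S.det) (z : Fin d → ℝ) :
    (((Lhat lam Φ)⁻¹ * Φᵀ * Ψ) *ᵥ z) ⬝ᵥ (Lhat lam Φ *ᵥ (((Lhat lam Φ)⁻¹ * Φᵀ * Ψ) *ᵥ z)) ≤
      sNorm (Φ * (Lhat lam Φ)⁻¹ * Φᵀ) * sNorm (S⁻¹ * (Ψᵀ * Ψ) * S⁻¹) *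
        (z ⬝ᵥ ((S * S) *ᵥ z)) := by
  rw [← mulVec_mulVec, ← mulVec_mulVec,
    nonsing_inv_transpose_mulVec_quadForm (isUnit_det_Lhat hlam Φ), mul_assoc]
  calc _ ≤ sNorm (Φ * (Lhat lam Φ)⁻¹ * Φᵀ) * ((Ψ *ᵥ z) ⬝ᵥ (Ψ *ᵥ z)) :=
        dotProduct_mulVec_le_sNorm_mul _ _
    _ ≤ _ := by
        gcongr
        · exact sNorm_nonneg _
        · rw [mulVec_dotProduct_mulVec_self]
          exact dotProduct_mulVec_le_sNorm_conj_mul hS hSu _ z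

theorem stmt8_general (N d H : ℕ) (lam : ℝ) (hlam : 0 < lam)
    (Φ Φbar : ℕ → Matrix (Fin N) (Fin d) ℝ) (ξ : ℕ → Fin N → ℝ)
    (S : ℕ → Matrix (Fin d) (Fin d) ℝ)
    (hS : ∀ h, 1 ≤ h → h ≤ H + 1 → (S h).PosSemidef ∧ S h * S h = Lhat lam (Φ h))
    (Λbar1 : Matrix (Fin d) (Fin d) ℝ)
    (h : ℕ) (hh1 : 1 ≤ h) (hhH : h ≤ H) :
    ((((List.range (h - 1)).map
          fun i => (Lhat lam (Φ (i + 1)))⁻¹ * (Φ (i + 1))ᵀ * Φbar (i + 2)).prod) *ᵥ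
        ((Lhat lam (Φ h))⁻¹ *ᵥ ((Φ h)ᵀ *ᵥ ξ h))) ⬝ᵥ
      (Λbar1 *ᵥ
        ((((List.range (h - 1)).map
            fun i => (Lhat lam (Φ (i + 1)))⁻¹ * (Φ (i + 1))ᵀ * Φbar (i + 2)).prod) *ᵥ
          ((Lhat lam (Φ h))⁻¹ *ᵥ ((Φ h)ᵀ *ᵥ ξ h)))) ≤
    sNorm ((S 1)⁻¹ * Λbar1 * (S 1)⁻¹) *
      ((∏ h' ∈ Finset.Icc 1 (h - 1),
          sNorm (Φ h' * (Lhat lam (Φ h'))⁻¹ * (Φ h')ᵀ) *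
            sNorm ((S (h' + 1))⁻¹ * ((Φbar (h' + 1))ᵀ * Φbar (h' + 1)) * (S (h' + 1))⁻¹)) *
        (ξ h ⬝ᵥ ((Φ h * (Lhat lam (Φ h))⁻¹ * (Φ h)ᵀ) *ᵥ ξ h))) := by
  have hroot : ∀ j, 1 ≤ j → j ≤ H + 1 → (S j).IsSymm ∧ IsUnit (S j).det := fun j hj1 hj2 =>
    ⟨isHermitian_iff_isSymm.mp (hS j hj1 hj2).1.isHermitian,
      isUnit_det_of_mul_self_eq_Lhat hlam (hS j hj1 hj2).2⟩
  set c : ℕ → ℝ := fun j => sNorm (Φ j * (Lhat lam (Φ j))⁻¹ * (Φ j)ᵀ) *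
    sNorm ((S (j + 1))⁻¹ * ((Φbar (j + 1))ᵀ * Φbar (j + 1)) * (S (j + 1))⁻¹) with hc
  set P := ((List.range (h - 1)).map
    fun i => (Lhat lam (Φ (i + 1)))⁻¹ * (Φ (i + 1))ᵀ * Φbar (i + 2)).prod
  set w := (Lhat lam (Φ h))⁻¹ *ᵥ ((Φ h)ᵀ *ᵥ ξ h)
  have hchain : (P *ᵥ w) ⬝ᵥ (Lhat lam (Φ 1) *ᵥ (P *ᵥ w)) ≤
      (∏ i ∈ Finset.range (h - 1), c (i + 1)) * (w ⬝ᵥ (Lhat lam (Φ h) *ᵥ w)) := by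
    refine (listProd_range_mulVec_le (fun i z => z ⬝ᵥ (Lhat lam (Φ (i + 1)) *ᵥ z)) _
      (fun i => c (i + 1)) (h - 1) (fun i _ => mul_nonneg (sNorm_nonneg _) (sNorm_nonneg _))
      (fun i hi z => ?_) w).trans_eq ?_
    · obtain ⟨hsymm, hunit⟩ := hroot (i + 2) (by omega) (by omega)
      simpa only [hc, (hS (i + 2) (by omega) (by omega)).2] using
        Lhat_inv_mul_transpose_mul_quadForm_le hlam _ _ hsymm hunit z
    · rw [Nat.sub_add_cancel hh1]
  obtain ⟨hsymm1, hunit1⟩ := hroot 1 le_rfl (by omega)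
  calc (P *ᵥ w) ⬝ᵥ (Λbar1 *ᵥ (P *ᵥ w))
      ≤ sNorm ((S 1)⁻¹ * Λbar1 * (S 1)⁻¹) * ((P *ᵥ w) ⬝ᵥ ((S 1 * S 1) *ᵥ (P *ᵥ w))) :=
        dotProduct_mulVec_le_sNorm_conj_mul hsymm1 hunit1 _ _
    _ ≤ sNorm ((S 1)⁻¹ * Λbar1 * (S 1)⁻¹) *
          ((∏ i ∈ Finset.range (h - 1), c (i + 1)) * (w ⬝ᵥ (Lhat lam (Φ h) *ᵥ w))) := by
        rw [(hS 1 le_rfl (by omega)).2]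
        exact mul_le_mul_of_nonneg_left hchain (sNorm_nonneg _)
    _ = _ := by
        rw [nonsing_inv_transpose_mulVec_quadForm (isUnit_det_Lhat hlam _),
          Finset.prod_range_add_one_eq_prod_Icc]

/-- Under the LSPE setup, for each `h ∈ {1, …, H}`, the vector
`v_h = (∏_{h'=1}^{h-1} Λ̂_{h'}⁻¹ Φ_{h'}ᵀ Φ̄_{h'+1}) Λ̂_h⁻¹ Φ_hᵀ ξ_h` satisfies
`v_hᵀ Λ̄₁ v_h ≤ ‖Λ̂₁^{-1/2} Λ̄₁ Λ̂₁^{-1/2}‖₂ ⋅ ∏_{h'=1}^{h-1}(‖Φ_{h'} Λ̂_{h'}⁻¹ Φ_{h'}ᵀ‖₂ ⋅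
‖Λ̂_{h'+1}^{-1/2} Φ̄_{h'+1}ᵀ Φ̄_{h'+1} Λ̂_{h'+1}^{-1/2}‖₂) ⋅ (ξ_hᵀ Φ_h Λ̂_h⁻¹ Φ_hᵀ ξ_h)`,
where `S h` denotes the positive semidefinite square root `Λ̂_h^{1/2}`. -/
theorem stmt8 (N d H : ℕ) (hH : 1 ≤ H) (lam : ℝ) (hlam : 0 < lam)
    (Φ Φbar : ℕ → Matrix (Fin N) (Fin d) ℝ) (ξ : ℕ → Fin N → ℝ)
    (S : ℕ → Matrix (Fin d) (Fin d) ℝ)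
    (hS : ∀ h, 1 ≤ h → h ≤ H + 1 → (S h).PosSemidef ∧ S h * S h = Lhat lam (Φ h))
    (Λbar1 : Matrix (Fin d) (Fin d) ℝ) (hΛbar1 : Λbar1.PosSemidef)
    (h : ℕ) (hh1 : 1 ≤ h) (hhH : h ≤ H) :
    ((((List.range (h - 1)).map
          fun i => (Lhat lam (Φ (i + 1)))⁻¹ * (Φ (i + 1))ᵀ * Φbar (i + 2)).prod) *ᵥ
        ((Lhat lam (Φ h))⁻¹ *ᵥ ((Φ h)ᵀ *ᵥ ξ h))) ⬝ᵥ
      (Λbar1 *ᵥ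
        ((((List.range (h - 1)).map
            fun i => (Lhat lam (Φ (i + 1)))⁻¹ * (Φ (i + 1))ᵀ * Φbar (i + 2)).prod) *ᵥ
          ((Lhat lam (Φ h))⁻¹ *ᵥ ((Φ h)ᵀ *ᵥ ξ h)))) ≤
    sNorm ((S 1)⁻¹ * Λbar1 * (S 1)⁻¹) *
      ((∏ h' ∈ Finset.Icc 1 (h - 1),
          sNorm (Φ h' * (Lhat lam (Φ h'))⁻¹ * (Φ h')ᵀ) *
            sNorm ((S (h' + 1))⁻¹ * ((Φbar (h' + 1))ᵀ * Φbar (h' + 1)) * (S (h' + 1))⁻¹)) *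
        (ξ h ⬝ᵥ ((Φ h * (Lhat lam (Φ h))⁻¹ * (Φ h)ᵀ) *ᵥ ξ h))) :=
  stmt8_general N d H lam hlam Φ Φbar ξ S hS Λbar1 h hh1 hhH
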